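/- For finite P ⊆ propositions and k ≥ 0: (1) for every j ≥ k, the canonical formula set E_k^P is E_j^P-discrete, i.e., whenever a canonical formula ξ ∈ E_k^P entails a finite disjunction ⋁_l ⋀_a □_a χ_l^a, then ξ entails ⋁_l ⋁{θ ∈ E_j^P : θ ⊨ ⋀_a □_a χ_l^a}; (2) for every j ≥ k−1, E_k^P is E_j^P-known, i.e., whenever ξ ∈ E_k^P entails □_a χ, then ξ ⊨ □_a ⋁{θ ∈ E_j^P : θ ⊨ χ}. -/

import Mathlib

/-- Modal formulas over label set `A` and proposition set `P`. -/
inductive Form (A P : Type) : Type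
  | top : Form A P
  | atom : P → Form A P
  | neg : Form A P → Form A P
  | or : Form A P → Form A P → Form A P
  | dia : A → Form A P → Form A P

namespace Form
variable {A P : Type}
def and (φ ψ : Form A P) : Form A P := Form.neg ((Form.neg φ).or (Form.neg ψ))
def box (a : A) (φ : Form A P) : Form A P := Form.neg (Form.dia a (Form.neg φ))
def bot : Form A P := Form.neg Form.top
def imp (φ ψ : Form A P) : Form A P := (Form.neg φ).or ψ
end Form

/-- Kripke models. -/
structure Kripke (A P : Type) : Type 1 where
  W : Type
  val : W → P → Prop
  rel : A → W → W → Prop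
  actual : Set W

variable {A P : Type}

/-- Satisfaction of a modal formula at a world. -/
def sat (M : Kripke A P) : M.W → Form A P → Prop
  | _, .top => True
  | w, .atom p => M.val w p
  | w, .neg φ => ¬ sat M w φ
  | w, .or φ ψ => sat M w φ ∨ sat M w ψ
  | w, .dia a φ => ∃ v, M.rel a w v ∧ sat M v φ

/-- Semantic entailment over all Kripke models. -/
def entails (φ ψ : Form A P) : Prop := ∀ (M : Kripke A P) (w : M.W), sat M w φ → sat M w ψ

/-- Semantic equivalence. -/
def equivF (φ ψ : Form A P) : Prop := entails φ ψ ∧ entails ψ φ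

def satisfiable (φ : Form A P) : Prop := ∃ (M : Kripke A P) (w : M.W), sat M w φ

def valid (φ : Form A P) : Prop := ∀ (M : Kripke A P) (w : M.W), sat M w φ

/-- Finite disjunction (empty disjunction is `⊥`). -/
def bigOr : List (Form A P) → Form A P
  | [] => Form.bot
  | φ :: l => φ.or (bigOr l)

/-- Finite conjunction (empty conjunction is `⊤`). -/
def bigAnd : List (Form A P) → Form A P
  | [] => Form.top
  | φ :: l => φ.and (bigAnd l)

/-- `⋀_{a ∈ A} □_a (ξ a)` for a finite label set `A`. -/
noncomputable def boxConj [Fintype A] (ξ : A → Form A P) : Form A P :=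
  bigAnd ((Finset.univ : Finset A).toList.map fun a => Form.box a (ξ a))

/-- `R` is a bisimulation between Kripke models `M` and `N`. -/
def IsBisim (M N : Kripke A P) (R : M.W → N.W → Prop) : Prop :=
  ∀ w v, R w v →
    ((∀ p, M.val w p ↔ N.val v p) ∧
     (∀ a w', M.rel a w w' → ∃ v', N.rel a v v' ∧ R w' v') ∧
     (∀ a v', N.rel a v v' → ∃ w', M.rel a w w' ∧ R w' v'))

/-- Pointed bisimilarity of Kripke models (Zig0/Zag0 on actual worlds). -/
def Bisimilar (M N : Kripke A P) : Prop :=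
  ∃ R, IsBisim M N R ∧ (∀ w ∈ M.actual, ∃ v ∈ N.actual, R w v) ∧
       (∀ v ∈ N.actual, ∃ w ∈ M.actual, R w v)

/-- Action models. -/
structure ActionModel (A P : Type) : Type 1 where
  E : Type
  pre : E → Form A P
  rel : A → E → E → Prop
  actual : Set E

/-- The update product `M ⊗ 𝔄`. -/
def update (M : Kripke A P) (𝔄 : ActionModel A P) : Kripke A P where
  W := {p : M.W × 𝔄.E // sat M p.1 (𝔄.pre p.2)}
  val w p := M.val w.1.1 p
  rel a w v := M.rel a w.1.1 v.1.1 ∧ 𝔄.rel a w.1.2 v.1.2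
  actual := {w | w.1.1 ∈ M.actual ∧ w.1.2 ∈ 𝔄.actual}

/-- Action model equivalence: same updating effect (up to bisimilarity) on every Kripke model. -/
def AMEquiv (𝔄 𝔅 : ActionModel A P) : Prop :=
  ∀ M : Kripke A P, Bisimilar (update M 𝔄) (update M 𝔅)

/-- `S` is an action bisimulation between action models `𝔄` and `𝔅`. -/
def IsActBisim (𝔄 𝔅 : ActionModel A P) (S : 𝔄.E → 𝔅.E → Prop) : Prop :=
  ∀ x y, S x y →
    (equivF (𝔄.pre x) (𝔅.pre y) ∧
     (∀ a x', 𝔄.rel a x x' → satisfiable ((𝔄.pre x).and (Form.dia a (𝔄.pre x'))) →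
        ∃ y', 𝔅.rel a y y' ∧ S x' y') ∧
     (∀ a y', 𝔅.rel a y y' → satisfiable ((𝔅.pre y).and (Form.dia a (𝔅.pre y'))) →
        ∃ x', 𝔄.rel a x x' ∧ S x' y'))

/-- Action bisimilarity of action models (with Zig0/Zag0 on actual events). -/
def ActBisimilar (𝔄 𝔅 : ActionModel A P) : Prop :=
  ∃ S, IsActBisim 𝔄 𝔅 S ∧ (∀ x ∈ 𝔄.actual, ∃ y ∈ 𝔅.actual, S x y) ∧
       (∀ y ∈ 𝔅.actual, ∃ x ∈ 𝔄.actual, S x y)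

/-- Zig of the generalized action emulation:
`η(x,y) ⊨ □_a (Pre^𝔄(x') → ⋁_{y →_a y'} (Pre^𝔅(y') ∧ η(x',y')))`, rendered semantically. -/
def GAEZig (𝔄 𝔅 : ActionModel A P) (η : 𝔄.E → 𝔅.E → Form A P) : Prop :=
  ∀ (a : A) (x : 𝔄.E) (y : 𝔅.E) (x' : 𝔄.E), 𝔄.rel a x x' →
    ∀ (M : Kripke A P) (w v : M.W), sat M w (η x y) → M.rel a w v → sat M v (𝔄.pre x') →
      ∃ y', 𝔅.rel a y y' ∧ sat M v (𝔅.pre y') ∧ sat M v (η x' y')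

/-- Zag of the generalized action emulation. -/
def GAEZag (𝔄 𝔅 : ActionModel A P) (η : 𝔄.E → 𝔅.E → Form A P) : Prop :=
  ∀ (a : A) (x : 𝔄.E) (y : 𝔅.E) (y' : 𝔅.E), 𝔅.rel a y y' →
    ∀ (M : Kripke A P) (w v : M.W), sat M w (η x y) → M.rel a w v → sat M v (𝔅.pre y') →
      ∃ x', 𝔄.rel a x x' ∧ sat M v (𝔄.pre x') ∧ sat M v (η x' y')

/-- Zig0 of the generalized action emulation:
`Pre^𝔄(x) ⊨ ⋁_{y ∈ E₀^𝔅} (Pre^𝔅(y) ∧ η(x,y))` for actual `x`. -/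
def GAEZig0 (𝔄 𝔅 : ActionModel A P) (η : 𝔄.E → 𝔅.E → Form A P) : Prop :=
  ∀ x ∈ 𝔄.actual, ∀ (M : Kripke A P) (w : M.W), sat M w (𝔄.pre x) →
    ∃ y ∈ 𝔅.actual, sat M w (𝔅.pre y) ∧ sat M w (η x y)

/-- Zag0 of the generalized action emulation. -/
def GAEZag0 (𝔄 𝔅 : ActionModel A P) (η : 𝔄.E → 𝔅.E → Form A P) : Prop :=
  ∀ y ∈ 𝔅.actual, ∀ (M : Kripke A P) (w : M.W), sat M w (𝔅.pre y) →
    ∃ x ∈ 𝔄.actual, sat M w (𝔄.pre x) ∧ sat M w (η x y)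

/-- `η` is a generalized action emulation witnessing `𝔄 ⇄_G 𝔅`. -/
def IsGAE (𝔄 𝔅 : ActionModel A P) (η : 𝔄.E → 𝔅.E → Form A P) : Prop :=
  GAEZig 𝔄 𝔅 η ∧ GAEZag 𝔄 𝔅 η ∧ GAEZig0 𝔄 𝔅 η ∧ GAEZag0 𝔄 𝔅 η

/-- `S` is a propositional action emulation witnessing `𝔄 ⇄_P 𝔅`
(Consistency, Zig, Zag, Zig0, Zag0; disjunctions rendered semantically). -/
def IsPAEW (𝔄 𝔅 : ActionModel A P) (S : 𝔄.E → 𝔅.E → Prop) : Prop :=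
  (∀ x y, S x y → satisfiable ((𝔄.pre x).and (𝔅.pre y))) ∧
  (∀ (a : A) x y x', S x y → 𝔄.rel a x x' →
     ∀ (M : Kripke A P) (w : M.W), sat M w (𝔄.pre x') →
       ∃ y', 𝔅.rel a y y' ∧ S x' y' ∧ sat M w (𝔅.pre y')) ∧
  (∀ (a : A) x y y', S x y → 𝔅.rel a y y' →
     ∀ (M : Kripke A P) (w : M.W), sat M w (𝔅.pre y') →
       ∃ x', 𝔄.rel a x x' ∧ S x' y' ∧ sat M w (𝔄.pre x')) ∧
  (∀ x ∈ 𝔄.actual, ∀ (M : Kripke A P) (w : M.W), sat M w (𝔄.pre x) →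
     ∃ y ∈ 𝔅.actual, S x y ∧ sat M w (𝔅.pre y)) ∧
  (∀ y ∈ 𝔅.actual, ∀ (M : Kripke A P) (w : M.W), sat M w (𝔅.pre y) →
     ∃ x ∈ 𝔄.actual, S x y ∧ sat M w (𝔄.pre x))

/-- `S` is an action emulation witnessing `𝔄 ⇄ 𝔅`
(Consistency, Zig, Zag, Zig0, Zag0; disjunctions and boxes rendered semantically). -/
def IsAEW (𝔄 𝔅 : ActionModel A P) (S : 𝔄.E → 𝔅.E → Prop) : Prop :=
  (∀ x y, S x y → satisfiable ((𝔄.pre x).and (𝔅.pre y))) ∧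
  (∀ (a : A) x y x', S x y → 𝔄.rel a x x' →
     ∀ (M : Kripke A P) (w v : M.W), sat M w (𝔄.pre x) → sat M w (𝔅.pre y) →
       M.rel a w v → sat M v (𝔄.pre x') →
       ∃ y', 𝔅.rel a y y' ∧ S x' y' ∧ sat M v (𝔅.pre y')) ∧
  (∀ (a : A) x y y', S x y → 𝔅.rel a y y' →
     ∀ (M : Kripke A P) (w v : M.W), sat M w (𝔄.pre x) → sat M w (𝔅.pre y) →
       M.rel a w v → sat M v (𝔅.pre y') →
       ∃ x', 𝔄.rel a x x' ∧ S x' y' ∧ sat M v (𝔄.pre x')) ∧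
  (∀ x ∈ 𝔄.actual, ∀ (M : Kripke A P) (w : M.W), sat M w (𝔄.pre x) →
     ∃ y ∈ 𝔅.actual, S x y ∧ sat M w (𝔅.pre y)) ∧
  (∀ y ∈ 𝔅.actual, ∀ (M : Kripke A P) (w : M.W), sat M w (𝔅.pre y) →
     ∃ x ∈ 𝔄.actual, S x y ∧ sat M w (𝔄.pre x))

/-- `L₀`: formulas `α` such that if `α` is satisfiable and `α ⊨ □_a φ` then `φ` is valid. -/
def L0 : Set (Form A P) :=
  {α | satisfiable α → ∀ (a : A) (φ : Form A P), entails α (Form.box a φ) → valid φ}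

/-- `Φ` is `Ψ`-regular. -/
def Regular (Φ Ψ : Set (Form A P)) : Prop :=
  ∀ φ ∈ Φ, ∀ ψ ∈ Ψ, entails ψ φ ∨ entails ψ φ.neg

/-- `Φ` is `Ψ`-basis: every `φ ∈ Φ` is equivalent to a disjunction of a subset of `Ψ`
(disjunction rendered semantically). -/
def IsBasisFor (Φ Ψ : Set (Form A P)) : Prop :=
  ∀ φ ∈ Φ, ∃ Ψ' ⊆ Ψ, ∀ (M : Kripke A P) (w : M.W), sat M w φ ↔ ∃ ψ ∈ Ψ', sat M w ψ

/-- `Φ` is `Ψ`-discrete: if `φ ∈ Φ` entails a finite disjunction `⋁_l ⋀_a □_a ξ_l^a`, then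
`φ ⊨ ⋁_l ⋁ G(⋀_a □_a ξ_l^a, Ψ)` (outer disjunctions rendered semantically). -/
def Discrete [Fintype A] (Φ Ψ : Set (Form A P)) : Prop :=
  ∀ φ ∈ Φ, ∀ (L : ℕ) (ξ : Fin L → A → Form A P),
    entails φ (bigOr ((List.finRange L).map fun l => boxConj (ξ l))) →
    ∀ (M : Kripke A P) (w : M.W), sat M w φ →
      ∃ (l : Fin L), ∃ ψ ∈ Ψ, entails ψ (boxConj (ξ l)) ∧ sat M w ψ

/-- `Φ` is `Ψ`-known: if `φ ∈ Φ` and `φ ⊨ □_a ξ`, then `φ ⊨ □_a ⋁ G(ξ, Ψ)`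
(inner disjunction rendered semantically). -/
def Known (Φ Ψ : Set (Form A P)) : Prop :=
  ∀ φ ∈ Φ, ∀ (a : A) (χ : Form A P), entails φ (Form.box a χ) →
    ∀ (M : Kripke A P) (w v : M.W), sat M w φ → M.rel a w v →
      ∃ ψ ∈ Ψ, entails ψ χ ∧ sat M v ψ

/-- `R_a^𝔄(x)`. -/
def Rset (𝔄 : ActionModel A P) (a : A) (x : 𝔄.E) : Set 𝔄.E :=
  {y | satisfiable ((𝔄.pre x).and (Form.dia a (𝔄.pre y)))}

/-- `Q_a^𝔄(x)`. -/
def Qset (𝔄 : ActionModel A P) (a : A) (x : 𝔄.E) : Set 𝔄.E :=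
  {y | 𝔄.rel a x y ∧ satisfiable ((𝔄.pre x).and (Form.dia a (𝔄.pre y)))}

/-- Modal depth. -/
def depth : Form A P → ℕ
  | .top => 0
  | .atom _ => 0
  | .neg φ => depth φ
  | .or φ ψ => max (depth φ) (depth ψ)
  | .dia _ φ => depth φ + 1

/-- Subformulas. -/
def Subf : Form A P → List (Form A P)
  | .top => [.top]
  | .atom p => [.atom p]
  | .neg φ => .neg φ :: Subf φ
  | .or φ ψ => .or φ ψ :: (Subf φ ++ Subf ψ)
  | .dia a φ => .dia a φ :: Subf φ

/-- Single negation. -/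
def singleNeg : Form A P → Form A P
  | .neg φ => φ
  | φ => .neg φ

/-- Closure under subformulas and single negations. -/
def closureF (φ : Form A P) : Set (Form A P) :=
  {χ | χ ∈ Subf φ ∨ ∃ ψ ∈ Subf φ, χ = singleNeg ψ}

/-- The cover modality `∇_a Ψ := □_a(⋁Ψ) ∧ ⋀_{ψ∈Ψ} ◇_a ψ` (for a finite list `Ψ`). -/
def cover (a : A) (l : List (Form A P)) : Form A P :=
  (Form.box a (bigOr l)).and (bigAnd (l.map (Form.dia a)))

/-- The complete conjunction of literals over `P` determined by `f : P → Bool`. -/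
noncomputable def litConj [Fintype P] (f : P → Bool) : Form A P :=
  bigAnd ((Finset.univ : Finset P).toList.map fun p =>
    bif f p then Form.atom p else Form.neg (Form.atom p))

/-- Shifted canonical formula sets: `canonS 0 = E₋₁^P = {⊤}`, `canonS (k+1) = E_k^P`,
where `E₀^P` is the set of complete conjunctions of literals over `P`, and
`E_k^P = {ψ ∧ ⋀_{a∈A} ∇_a Φ_a : ψ ∈ E₀^P, Φ_a ⊆ E_{k-1}^P}` for `k > 0`. -/
noncomputable def canonS [Fintype A] [Fintype P] : ℕ → Set (Form A P)
  | 0 => {Form.top}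
  | 1 => {φ | ∃ f : P → Bool, φ = litConj f}
  | (k+2) => {φ | ∃ (f : P → Bool) (F : A → List (Form A P)),
      (∀ a, ∀ χ ∈ F a, χ ∈ canonS (k+1)) ∧
      φ = (litConj f).and (bigAnd ((Finset.univ : Finset A).toList.map fun a =>
        cover a (F a)))}

section AuxLemmas
variable {A P : Type}

theorem sat_neg {M : Kripke A P} {w : M.W} {φ : Form A P} :
    sat M w (Form.neg φ) ↔ ¬ sat M w φ := Iff.rfl

theorem sat_and {M : Kripke A P} {w : M.W} {φ ψ : Form A P} :
    sat M w (φ.and ψ) ↔ sat M w φ ∧ sat M w ψ := by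
  simp [Form.and, sat]

theorem sat_box {M : Kripke A P} {w : M.W} {a : A} {φ : Form A P} :
    sat M w (Form.box a φ) ↔ ∀ v, M.rel a w v → sat M v φ := by
  simp [Form.box, sat]

theorem sat_bigAnd {M : Kripke A P} {w : M.W} : ∀ {l : List (Form A P)},
    sat M w (bigAnd l) ↔ ∀ φ ∈ l, sat M w φ
  | [] => by simp [bigAnd, sat]
  | φ :: l => by simp [bigAnd, sat_and, sat_bigAnd (l := l)]

theorem sat_bigOr {M : Kripke A P} {w : M.W} : ∀ {l : List (Form A P)},
    sat M w (bigOr l) ↔ ∃ φ ∈ l, sat M w φ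
  | [] => by simp [bigOr, Form.bot, sat]
  | φ :: l => by simp [bigOr, sat, sat_bigOr (l := l)]

theorem sat_litConj [Fintype P] {M : Kripke A P} {w : M.W} {f : P → Bool} :
    sat M w (litConj f) ↔ ∀ p, (M.val w p ↔ f p = true) := by
  rw [litConj, sat_bigAnd]
  constructor
  · intro h p
    have := h ((fun p => bif f p then Form.atom p else (Form.atom p).neg) p)
      (List.mem_map_of_mem (Finset.mem_toList.2 (Finset.mem_univ p)))
    cases hfp : f p <;> simp [hfp, sat] at this ⊢ <;> tauto
  · intro h φ hφ
    simp only [List.mem_map] at hφ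
    obtain ⟨p, -, rfl⟩ := hφ
    have := h p
    cases hfp : f p <;> simp [hfp, sat] <;> simp [hfp] at this <;> tauto

theorem sat_cover {M : Kripke A P} {w : M.W} {a : A} {l : List (Form A P)} :
    sat M w (cover a l) ↔
      (∀ v, M.rel a w v → ∃ θ ∈ l, sat M v θ) ∧ (∀ θ ∈ l, ∃ v, M.rel a w v ∧ sat M v θ) := by
  simp only [cover, sat_and, sat_box, sat_bigOr, sat_bigAnd, List.mem_map]
  constructor
  · rintro ⟨h1, h2⟩
    exact ⟨h1, fun θ hθ => h2 _ ⟨θ, hθ, rfl⟩⟩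
  · rintro ⟨h1, h2⟩
    refine ⟨h1, ?_⟩
    rintro φ ⟨θ, hθ, rfl⟩
    exact h2 θ hθ

theorem sat_boxConj [Fintype A] {M : Kripke A P} {w : M.W} {ξ : A → Form A P} :
    sat M w (boxConj ξ) ↔ ∀ (a : A) (v : M.W), M.rel a w v → sat M v (ξ a) := by
  rw [boxConj, sat_bigAnd]
  constructor
  · intro h a v hv
    have := h ((fun a => Form.box a (ξ a)) a)
      (List.mem_map_of_mem (Finset.mem_toList.2 (Finset.mem_univ a)))
    exact sat_box.1 this v hv
  · intro h φ hφ
    simp only [List.mem_map] at hφ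
    obtain ⟨a, -, rfl⟩ := hφ
    exact sat_box.2 (h a)

theorem depth_and {φ ψ : Form A P} : depth (φ.and ψ) = max (depth φ) (depth ψ) := rfl

theorem depth_bigAnd_le {m : ℕ} : ∀ {l : List (Form A P)}, (∀ θ ∈ l, depth θ ≤ m) →
    depth (bigAnd l) ≤ m
  | [] => fun _ => by simp [bigAnd, depth]
  | φ :: l => fun h => by
      simp only [bigAnd, depth_and, sup_le_iff]
      exact ⟨h _ (by simp), depth_bigAnd_le fun θ hθ => h θ (by simp [hθ])⟩

theorem depth_bigOr_le {m : ℕ} : ∀ {l : List (Form A P)}, (∀ θ ∈ l, depth θ ≤ m) →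
    depth (bigOr l) ≤ m
  | [] => fun _ => by simp [bigOr, Form.bot, depth]
  | φ :: l => fun h => by
      simp only [bigOr, depth, sup_le_iff]
      exact ⟨h _ (by simp), depth_bigOr_le fun θ hθ => h θ (by simp [hθ])⟩

theorem depth_litConj_le [Fintype P] {f : P → Bool} : depth (litConj (A := A) f) ≤ 0 := by
  apply depth_bigAnd_le
  intro θ hθ
  simp only [List.mem_map] at hθ
  obtain ⟨p, -, rfl⟩ := hθ
  cases f p <;> simp [depth]

theorem depth_cover_le {m : ℕ} {a : A} {l : List (Form A P)}
    (h : ∀ θ ∈ l, depth θ ≤ m) : depth (cover a l) ≤ m + 1 := by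
  simp only [cover, depth_and, Form.box, depth, sup_le_iff]
  refine ⟨by simpa using depth_bigOr_le h, ?_⟩
  apply depth_bigAnd_le
  intro θ hθ
  simp only [List.mem_map] at hθ
  obtain ⟨ψ, hψ, rfl⟩ := hθ
  simpa [depth] using h ψ hψ

theorem canon_depth [Fintype A] [Fintype P] :
    ∀ n, ∀ θ ∈ canonS (A := A) (P := P) n, depth θ ≤ n - 1
  | 0 => by rintro θ rfl; simp [depth]
  | 1 => by rintro θ ⟨f, rfl⟩; simpa using depth_litConj_le
  | (k+2) => by
      rintro θ ⟨f, F, hF, rfl⟩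
      simp only [depth_and, sup_le_iff, Nat.add_sub_cancel]
      constructor
      · exact le_trans depth_litConj_le (Nat.zero_le _)
      · apply depth_bigAnd_le
        intro ψ hψ
        simp only [List.mem_map] at hψ
        obtain ⟨a, -, rfl⟩ := hψ
        apply depth_cover_le
        intro χ hχ
        have := canon_depth (k+1) χ (hF a χ hχ)
        omega

end AuxLemmas
section DescMachinery
variable {A P : Type}

/-- Canonical descriptors of pointed models, level by level. -/
def Desc (A P : Type) : ℕ → Type
  | 0 => PUnit
  | 1 => P → Bool
  | (n+2) => (P → Bool) × (A → Set (Desc A P (n+1)))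

theorem desc_finite (A P : Type) [Finite A] [Finite P] : ∀ n, Finite (Desc A P n)
  | 0 => by unfold Desc; infer_instance
  | 1 => by unfold Desc; infer_instance
  | (n+2) => by have := desc_finite A P (n+1); unfold Desc; infer_instance

noncomputable def finListOf {α : Type} (s : Set α) : List α :=
  @dite _ s.Finite (Classical.propDecidable _) (fun h => h.toFinset.toList) (fun _ => [])

theorem mem_finListOf {α : Type} {s : Set α} (h : s.Finite) {x : α} :
    x ∈ finListOf s ↔ x ∈ s := by
  rw [finListOf, dif_pos h]
  simp [Finset.mem_toList, Set.Finite.mem_toFinset]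

noncomputable def toForm [Fintype A] [Fintype P] : (n : ℕ) → Desc A P n → Form A P
  | 0, _ => Form.top
  | 1, f => litConj f
  | (n+2), d => (litConj d.1).and (bigAnd ((Finset.univ : Finset A).toList.map fun a =>
      cover a (finListOf (toForm (n+1) '' d.2 a))))

noncomputable def desc (M : Kripke A P) : (n : ℕ) → M.W → Desc A P n
  | 0, _ => PUnit.unit
  | 1, w => fun p => @decide (M.val w p) (Classical.propDecidable _)
  | (n+2), w => ⟨fun p => @decide (M.val w p) (Classical.propDecidable _),
      fun a => {d | ∃ v, M.rel a w v ∧ desc M (n+1) v = d}⟩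

theorem image_finite [Fintype A] [Fintype P] (n : ℕ) (s : Set (Desc A P n)) :
    (toForm n '' s).Finite :=
  have : Finite (Desc A P n) := desc_finite A P n
  (s.toFinite).image _

theorem toForm_mem_canonS [Fintype A] [Fintype P] :
    ∀ (n : ℕ) (d : Desc A P n), toForm n d ∈ canonS (A := A) (P := P) n
  | 0, _ => rfl
  | 1, f => ⟨f, rfl⟩
  | (n+2), d => by
      refine ⟨d.1, fun a => finListOf (toForm (n+1) '' d.2 a), fun a χ hχ => ?_, rfl⟩
      rw [mem_finListOf (image_finite _ _)] at hχ
      obtain ⟨d', -, rfl⟩ := hχ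
      exact toForm_mem_canonS (n+1) d'

theorem sat_toForm_iff [Fintype A] [Fintype P] :
    ∀ (n : ℕ) (d : Desc A P n) (N : Kripke A P) (u : N.W),
      sat N u (toForm n d) ↔ desc N n u = d
  | 0, d, N, u => by
      cases d
      exact ⟨fun _ => rfl, fun _ => trivial⟩
  | 1, f, N, u => by
      rw [show toForm 1 f = litConj f from rfl]
      refine sat_litConj.trans ?_
      show (∀ p, (N.val u p ↔ f p = true)) ↔
        (fun p => @decide (N.val u p) (Classical.propDecidable _)) = f
      constructor
      · intro h
        funext p
        have := h p
        cases hfp : f p <;> simp [hfp] at this <;> simp [this]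
      · intro h p
        have := congrFun h p
        cases hfp : f p <;> rw [hfp] at this <;> simp at this <;> simp [this, hfp]
  | (n+2), d, N, u => by
      rw [show toForm (n+2) d = (litConj d.1).and
          (bigAnd ((Finset.univ : Finset A).toList.map fun a =>
            cover a (finListOf (toForm (n+1) '' d.2 a)))) from rfl,
        sat_and, sat_litConj, sat_bigAnd]
      rw [show desc N (n+2) u =
          ⟨fun p => @decide (N.val u p) (Classical.propDecidable _),
           fun a => {d' | ∃ v, N.rel a u v ∧ desc N (n+1) v = d'}⟩ from rfl]
      refine Iff.trans ?_ Prod.ext_iff.symm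
      constructor
      · rintro ⟨hval, hcov⟩
        constructor
        · funext p
          have := hval p
          cases hfp : d.1 p <;> simp [hfp] at this <;> simp [this]
        · funext a
          have hca := sat_cover.1 (hcov ((fun a => cover a (finListOf (toForm (n+1) '' d.2 a))) a)
            (List.mem_map_of_mem (Finset.mem_toList.2 (Finset.mem_univ a))))
          ext d'
          constructor
          · rintro ⟨v, hv, rfl⟩
            obtain ⟨θ, hθ, hsθ⟩ := hca.1 v hv
            rw [mem_finListOf (image_finite _ _)] at hθ
            obtain ⟨d'', hd'', rfl⟩ := hθ
            have := (sat_toForm_iff (n+1) d'' N v).1 hsθ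
            rw [this]
            exact hd''
          · intro hd'
            obtain ⟨v, hv, hsθ⟩ := hca.2 (toForm (n+1) d')
              ((mem_finListOf (image_finite _ _)).2 ⟨d', hd', rfl⟩)
            exact ⟨v, hv, (sat_toForm_iff (n+1) d' N v).1 hsθ⟩
      · rintro ⟨h1, h2⟩
        constructor
        · intro p
          have := congrFun h1.symm p
          cases hfp : d.1 p <;> rw [hfp] at this <;> simp at this <;> simp [this, hfp]
        · intro φ hφ
          simp only [List.mem_map] at hφ
          obtain ⟨a, -, rfl⟩ := hφ
          rw [sat_cover]
          have h2a := congrFun h2 a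
          constructor
          · intro v hv
            have hmem : desc N (n+1) v ∈ d.2 a := by
              rw [← h2a]; exact ⟨v, hv, rfl⟩
            refine ⟨toForm (n+1) (desc N (n+1) v),
              (mem_finListOf (image_finite _ _)).2 ⟨_, hmem, rfl⟩, ?_⟩
            exact (sat_toForm_iff (n+1) _ N v).2 rfl
          · intro θ hθ
            rw [mem_finListOf (image_finite _ _)] at hθ
            obtain ⟨d', hd', rfl⟩ := hθ
            rw [← h2a] at hd'
            obtain ⟨v, hv, hdv⟩ := hd'
            exact ⟨v, hv, (sat_toForm_iff (n+1) d' N v).2 hdv⟩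

theorem desc_val {M N : Kripke A P} {w : M.W} {u : N.W} :
    ∀ {n : ℕ}, 1 ≤ n → desc M n w = desc N n u → ∀ p, (M.val w p ↔ N.val u p)
  | 0, h, _, _ => by omega
  | 1, _, h, p => by
      have := congrFun h p
      simpa [desc, decide_eq_decide] using this
  | (n+2), _, h, p => by
      have := congrFun (congrArg Prod.fst h) p
      simpa [desc, decide_eq_decide] using this

theorem desc_succ {M N : Kripke A P} {w v : M.W} {u : N.W} {n : ℕ} {a : A}
    (h : desc M (n+2) w = desc N (n+2) u) (hv : M.rel a w v) :
    ∃ v', N.rel a u v' ∧ desc M (n+1) v = desc N (n+1) v' := by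
  have h2 := congrFun (congrArg Prod.snd h) a
  have hmem : desc M (n+1) v ∈ (desc N (n+2) u).2 a := by
    rw [← h2]; exact ⟨v, hv, rfl⟩
  have hmem' : ∃ x, N.rel a u x ∧ desc N (n+1) x = desc M (n+1) v := hmem
  obtain ⟨v', hv', hdv⟩ := hmem'
  exact ⟨v', hv', hdv.symm⟩

theorem desc_agree {M N : Kripke A P} (φ : Form A P) :
    ∀ {n : ℕ} {w : M.W} {u : N.W}, desc M n w = desc N n u → depth φ < n →
      (sat M w φ ↔ sat N u φ) := by
  induction φ with
  | top => intro n w u _ _; exact Iff.rfl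
  | atom p => intro n w u h hd; exact desc_val (by omega) h p
  | neg φ ih => intro n w u h hd; exact not_congr (ih h (by simpa [depth] using hd))
  | or φ ψ ihφ ihψ =>
      intro n w u h hd
      simp only [depth, max_lt_iff] at hd
      exact or_congr (ihφ h hd.1) (ihψ h hd.2)
  | dia a φ ih =>
      intro n w u h hd
      simp only [depth] at hd
      obtain ⟨m, rfl⟩ : ∃ m, n = m + 2 := ⟨n - 2, by omega⟩
      show (∃ v, M.rel a w v ∧ sat M v φ) ↔ (∃ v, N.rel a u v ∧ sat N v φ)
      constructor
      · rintro ⟨v, hv, hs⟩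
        obtain ⟨v', hv', hdv⟩ := desc_succ h hv
        exact ⟨v', hv', (ih hdv (by omega)).1 hs⟩
      · rintro ⟨v', hv', hs⟩
        obtain ⟨v, hv, hdv⟩ := desc_succ h.symm hv'
        exact ⟨v, hv, (ih hdv.symm (by omega)).2 hs⟩

theorem char_sat [Fintype A] [Fintype P] (M : Kripke A P) (w : M.W) (n : ℕ) :
    sat M w (toForm n (desc M n w)) := (sat_toForm_iff n _ M w).2 rfl

theorem char_entails [Fintype A] [Fintype P] {M : Kripke A P} {w : M.W} {n : ℕ}
    {φ : Form A P} (hd : depth φ < n) (hs : sat M w φ) :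
    entails (toForm n (desc M n w)) φ := by
  intro N u hu
  have h : desc M n w = desc N n u := ((sat_toForm_iff n _ N u).1 hu).symm
  exact (desc_agree φ h hd).1 hs

end DescMachinery
section RootModel
variable {A P : Type}

structure PModel (A P : Type) : Type 1 where
  M : Kripke A P
  w : M.W

def rootModel (f : P → Bool) {I : Type} (lab : I → A) (pm : I → PModel A P) : Kripke A P where
  W := Option ((i : I) × (pm i).M.W)
  val x p := match x with
    | none => f p = true
    | some s => (pm s.1).M.val s.2 p
  rel a x y := match x, y with
    | none, some s => lab s.1 = a ∧ s.2 = (pm s.1).w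
    | some s, some t => ∃ h : s.1 = t.1, (pm t.1).M.rel a (h ▸ s.2) t.2
    | _, none => False
  actual := ∅

theorem rootModel_sat_some (f : P → Bool) {I : Type} (lab : I → A) (pm : I → PModel A P)
    (χ : Form A P) : ∀ (i : I) (x : (pm i).M.W),
    sat (rootModel f lab pm) (some ⟨i, x⟩) χ ↔ sat (pm i).M x χ := by
  induction χ with
  | top => intro i x; exact Iff.rfl
  | atom p => intro i x; exact Iff.rfl
  | neg χ ih => intro i x; exact not_congr (ih i x)
  | or χ ψ ih1 ih2 => intro i x; exact or_congr (ih1 i x) (ih2 i x)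
  | dia a χ ih =>
    intro i x
    show (∃ y, (rootModel f lab pm).rel a (some ⟨i, x⟩) y ∧ sat _ y χ) ↔ _
    constructor
    · rintro ⟨y, hy, hs⟩
      rcases y with _ | ⟨j, y'⟩
      · exact hy.elim
      · obtain ⟨h, hr⟩ := hy
        have h' : i = j := h
        subst h'
        have hr' : (pm i).M.rel a x y' := hr
        exact ⟨y', hr', (ih i y').1 hs⟩
    · rintro ⟨v, hv, hs⟩
      exact ⟨some ⟨i, v⟩, ⟨rfl, hv⟩, (ih i v).2 hs⟩

theorem root_sat_canon [Fintype A] [Fintype P] (f : P → Bool) {I : Type} (lab : I → A)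
    (pm : I → PModel A P) (F : A → List (Form A P))
    (Hbox : ∀ i, sat (pm i).M (pm i).w (bigOr (F (lab i))))
    (Hdia : ∀ (a : A), ∀ θ ∈ F a, ∃ i, lab i = a ∧ sat (pm i).M (pm i).w θ) :
    sat (rootModel f lab pm) none
      ((litConj f).and (bigAnd ((Finset.univ : Finset A).toList.map fun a => cover a (F a)))) := by
  apply sat_and.2
  refine ⟨sat_litConj.2 fun p => Iff.rfl, sat_bigAnd.2 ?_⟩
  intro φ hφ
  simp only [List.mem_map] at hφ
  obtain ⟨a, -, rfl⟩ := hφ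
  apply sat_cover.2
  constructor
  · intro y hy
    rcases y with _ | ⟨i, x⟩
    · exact hy.elim
    · obtain ⟨hlab, hx⟩ := hy
      have hlab' : lab i = a := hlab
      have hx' : x = (pm i).w := hx
      subst hx'
      obtain ⟨θ, hθ, hs⟩ := sat_bigOr.1 (Hbox i)
      rw [hlab'] at hθ
      exact ⟨θ, hθ, (rootModel_sat_some f lab pm θ i _).2 hs⟩
  · intro θ hθ
    obtain ⟨i, hlab, hs⟩ := Hdia a θ hθ
    exact ⟨some ⟨i, (pm i).w⟩, ⟨hlab, rfl⟩, (rootModel_sat_some f lab pm θ i _).2 hs⟩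

theorem canon_sat [Fintype A] [Fintype P] :
    ∀ n, ∀ θ ∈ canonS (A := A) (P := P) n, satisfiable θ
  | 0 => by
      rintro θ rfl
      exact ⟨⟨PUnit, fun _ _ => False, fun _ _ _ => False, ∅⟩, PUnit.unit, trivial⟩
  | 1 => by
      rintro θ ⟨f, rfl⟩
      refine ⟨⟨PUnit, fun _ p => f p = true, fun _ _ _ => False, ∅⟩, PUnit.unit, ?_⟩
      exact sat_litConj.2 fun p => Iff.rfl
  | (k+2) => by
      rintro θ ⟨f, F, hF, rfl⟩
      have hwit : ∀ (i : (a : A) × {x : Form A P // x ∈ F a}),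
          ∃ pmod : PModel A P, sat pmod.M pmod.w i.2.1 := by
        intro i
        obtain ⟨Mo, wo, h⟩ := canon_sat (k+1) i.2.1 (hF i.1 i.2.1 i.2.2)
        exact ⟨⟨Mo, wo⟩, h⟩
      choose pm hpm using hwit
      refine ⟨rootModel f (fun i => i.1) pm, none, root_sat_canon f _ pm F ?_ ?_⟩
      · intro i
        exact sat_bigOr.2 ⟨i.2.1, i.2.2, hpm i⟩
      · intro a θ hθ
        exact ⟨⟨a, θ, hθ⟩, rfl, hpm ⟨a, θ, hθ⟩⟩

end RootModel
section MainParts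
variable {A P : Type}

theorem known_part [Fintype A] [Fintype P] (k j : ℕ) (hk : 1 ≤ k) (hkj : k ≤ j + 1) :
    Known (canonS (A := A) (P := P) k) (canonS (A := A) (P := P) j) := by
  intro φ hφ a χ hent M w v hw hr
  obtain ⟨k', rfl⟩ : ∃ k', k = k' + 1 := ⟨k - 1, by omega⟩
  rcases k' with _ | m
  · obtain ⟨f, rfl⟩ := hφ
    have hvalid : valid χ := by
      intro N u
      have hroot : sat (rootModel f (fun _ : PUnit => a) (fun _ => ⟨N, u⟩)) none (litConj f) :=
        sat_litConj.2 fun p => Iff.rfl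
      have hbox := hent _ _ hroot
      replace hbox := sat_box.1 hbox
      have hsu := hbox (some ⟨PUnit.unit, u⟩) ⟨rfl, rfl⟩
      exact (rootModel_sat_some f (fun _ : PUnit => a) (fun _ => (⟨N, u⟩ : PModel A P)) χ PUnit.unit u).1 hsu
    exact ⟨toForm j (desc M j v), toForm_mem_canonS j _, fun N u _ => hvalid N u, char_sat M v j⟩
  · obtain ⟨f, F, hF, rfl⟩ := hφ
    have hw' := sat_and.1 hw
    have hcov : ∀ a', sat M w (cover a' (F a')) := fun a' =>
      sat_bigAnd.1 hw'.2 _ (List.mem_map_of_mem (Finset.mem_toList.2 (Finset.mem_univ a')))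
    obtain ⟨θ, hθF, hθv⟩ := (sat_cover.1 (hcov a)).1 v hr
    have hθχ : entails θ χ := by
      intro N u hu
      have hwit : ∀ (i : (a' : A) × {x : Form A P // x ∈ F a'}),
          ∃ pmod : PModel A P, sat pmod.M pmod.w i.2.1 := by
        intro i
        obtain ⟨Mo, wo, h⟩ := canon_sat (m+1) i.2.1 (hF i.1 i.2.1 i.2.2)
        exact ⟨⟨Mo, wo⟩, h⟩
      choose wit hwitsat using hwit
      have hroot := root_sat_canon (I := Option ((a' : A) × {x : Form A P // x ∈ F a'})) f
        (fun i => match i with | none => a | some i' => i'.1)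
        (fun i => match i with | none => ⟨N, u⟩ | some i' => wit i')
        F
        (by
          intro i
          rcases i with _ | i'
          · exact sat_bigOr.2 ⟨θ, hθF, hu⟩
          · exact sat_bigOr.2 ⟨i'.2.1, i'.2.2, hwitsat i'⟩)
        (by
          intro a' θ' hθ'
          exact ⟨some ⟨a', θ', hθ'⟩, rfl, hwitsat _⟩)
      have hbox := hent _ _ hroot
      replace hbox := sat_box.1 hbox
      have hsu := hbox (some ⟨none, u⟩) ⟨rfl, rfl⟩
      exact (rootModel_sat_some f (fun i => match i with | none => a | some i' => i'.1)
        (fun i => match i with | none => (⟨N, u⟩ : PModel A P) | some i' => wit i') χ none u).1 hsu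
    have hdθ : depth θ < j := by
      have h1 : depth θ ≤ m := by simpa using canon_depth (m+1) θ (hF a θ hθF)
      omega
    refine ⟨toForm j (desc M j v), toForm_mem_canonS j _, ?_, char_sat M v j⟩
    intro N u hu
    exact hθχ N u (char_entails hdθ hθv N u hu)

theorem discrete_part [Fintype A] [Fintype P] (k j : ℕ) (hk : 1 ≤ k) (hkj : k ≤ j) :
    Discrete (canonS (A := A) (P := P) k) (canonS (A := A) (P := P) j) := by
  intro φ hφ L ξ hent M w hw
  have hdφ : depth φ < j := by
    have := canon_depth k φ hφ
    omega
  suffices h : ∃ l : Fin L, entails (toForm j (desc M j w)) (boxConj (ξ l)) by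
    obtain ⟨l, hl⟩ := h
    exact ⟨l, toForm j (desc M j w), toForm_mem_canonS j _, hl, char_sat M w j⟩
  by_contra hno
  push_neg at hno
  have hex : ∀ l : Fin L, ∃ (N : Kripke A P) (u : N.W), sat N u (toForm j (desc M j w)) ∧
      ∃ (a : A) (v : N.W), N.rel a u v ∧ ¬ sat N v (ξ l a) := by
    intro l
    have h := hno l
    rw [entails] at h
    push_neg at h
    obtain ⟨N, u, hu, hnb⟩ := h
    rw [sat_boxConj] at hnb
    push_neg at hnb
    obtain ⟨a, v, hv, hns⟩ := hnb
    exact ⟨N, u, hu, a, v, hv, hns⟩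
  choose Nf uf hψf af vf hrelf hnsatf using hex
  have hφf : ∀ l, sat (Nf l) (uf l) φ := by
    intro l
    have h := (sat_toForm_iff j _ (Nf l) (uf l)).1 (hψf l)
    exact (desc_agree φ h hdφ).2 hw
  obtain ⟨k', rfl⟩ : ∃ k', k = k' + 1 := ⟨k - 1, by omega⟩
  rcases k' with _ | m
  · obtain ⟨f, rfl⟩ := hφ
    have hroot : sat (rootModel f af (fun l => ⟨Nf l, vf l⟩)) none (litConj f) :=
      sat_litConj.2 fun p => Iff.rfl
    have hdisj := hent _ _ hroot
    obtain ⟨ψ', hmem, hs⟩ := sat_bigOr.1 hdisj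
    simp only [List.mem_map] at hmem
    obtain ⟨l, -, rfl⟩ := hmem
    have hval := sat_boxConj.1 hs (af l) (some ⟨l, vf l⟩) ⟨rfl, rfl⟩
    exact hnsatf l ((rootModel_sat_some f af (fun l => (⟨Nf l, vf l⟩ : PModel A P)) (ξ l (af l)) l (vf l)).1 hval)
  · obtain ⟨f, F, hF, rfl⟩ := hφ
    have hwit : ∀ (i : (a' : A) × {x : Form A P // x ∈ F a'}),
        ∃ pmod : PModel A P, sat pmod.M pmod.w i.2.1 := by
      intro i
      obtain ⟨Mo, wo, h⟩ := canon_sat (m+1) i.2.1 (hF i.1 i.2.1 i.2.2)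
      exact ⟨⟨Mo, wo⟩, h⟩
    choose wit hwitsat using hwit
    have hroot := root_sat_canon (I := Fin L ⊕ ((a' : A) × {x : Form A P // x ∈ F a'})) f
      (fun i => match i with | Sum.inl l => af l | Sum.inr i' => i'.1)
      (fun i => match i with | Sum.inl l => ⟨Nf l, vf l⟩ | Sum.inr i' => wit i')
      F
      (by
        intro i
        rcases i with l | i'
        · have hcovl : sat (Nf l) (uf l) (cover (af l) (F (af l))) := by
            have h2 := (sat_and.1 (hφf l)).2
            exact sat_bigAnd.1 h2 _
              (List.mem_map_of_mem (Finset.mem_toList.2 (Finset.mem_univ (af l))))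
          obtain ⟨θ, hθ, hs⟩ := (sat_cover.1 hcovl).1 (vf l) (hrelf l)
          exact sat_bigOr.2 ⟨θ, hθ, hs⟩
        · exact sat_bigOr.2 ⟨i'.2.1, i'.2.2, hwitsat i'⟩)
      (by
        intro a' θ' hθ'
        exact ⟨Sum.inr ⟨a', θ', hθ'⟩, rfl, hwitsat _⟩)
    have hdisj := hent _ _ hroot
    obtain ⟨ψ', hmem, hs⟩ := sat_bigOr.1 hdisj
    simp only [List.mem_map] at hmem
    obtain ⟨l, -, rfl⟩ := hmem
    have hval := sat_boxConj.1 hs (af l) (some ⟨Sum.inl l, vf l⟩) ⟨rfl, rfl⟩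
    exact hnsatf l ((rootModel_sat_some f
      (fun i => match i with | Sum.inl l => af l | Sum.inr i' => i'.1)
      (fun i => match i with | Sum.inl l => (⟨Nf l, vf l⟩ : PModel A P) | Sum.inr i' => wit i')
      (ξ l (af l)) (Sum.inl l) (vf l)).1 hval)

end MainParts

/-- (1) for `j ≥ k`, `E_k^P` is `E_j^P`-discrete; (2) for `j ≥ k-1`,
`E_k^P` is `E_j^P`-known. (Here `canonS (k+1) = E_k^P` and `canonS 0 = E₋₁^P = {⊤}`,
so the indices are shifted by one.) -/
theorem canon_discrete_known [Fintype A] [Fintype P] :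
    (∀ k j : ℕ, 1 ≤ k → k ≤ j →
       Discrete (canonS (A := A) (P := P) k) (canonS (A := A) (P := P) j)) ∧
    (∀ k j : ℕ, 1 ≤ k → k ≤ j + 1 →
       Known (canonS (A := A) (P := P) k) (canonS (A := A) (P := P) j)) :=
  ⟨discrete_part, known_part⟩
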